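/- Suppose θ : [0,T]×ℝ^r×ℝ^d → ℝ is continuously differentiable in t and q and twice continuously differentiable in S, satisfies θ(T,q,S) = −qᵀΓq, and for all (t,q,S) ∈ [0,T)×ℝ^r×ℝ^d satisfies 0 = ∂ₜθ + (S̄−S)ᵀRᵀ(𝒥ᵀq + ∇_Sθ) + ½Tr(Σ·D²_{SS}θ) − (ρ/2)(𝒥ᵀq + ∇_Sθ)ᵀΣ(𝒥ᵀq + ∇_Sθ) + sup_{v∈ℝ^r}{ vᵀ∇_qθ − vᵀηv } + Σ_{i=1}^r Σ_{n=1}^N ∫₀^∞ z·H^{i,n,b}(z, (θ(t,q,S) − θ(t,q+z·eⁱ,S))/z) ψ^{i,n,b}(dz) + Σ_{i=1}^r Σ_{n=1}^N ∫₀^∞ z·H^{i,n,a}(z, (θ(t,q,S) − θ(t,q−z·eⁱ,S))/z) ψ^{i,n,a}(dz), where eⁱ is the i-th standard basis vector of ℝ^r; assume all the displayed integrals below are also finite. Then w(t,x,q,S) := −exp(−ρ(x + qᵀ𝒥S + θ(t,q,S))) satisfies, for all (t,x,q,S) ∈ [0,T)×ℝ×ℝ^r×ℝ^d, 0 = ∂ₜw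 + (S̄−S)ᵀRᵀ∇_Sw + ½Tr(Σ·D²_{SS}w) + sup_{v∈ℝ^r}{ vᵀ∇_qw − (vᵀ𝒥S + vᵀηv)·∂ₓw } + Σ_{i=1}^r Σ_{n=1}^N ∫₀^∞ sup_{δ∈ℝ} Λ^{i,n,b}(δ)·( w(t, x − z(Sⁱ − δ), q + z·eⁱ, S) − w(t,x,q,S) ) ψ^{i,n,b}(dz) + Σ_{i=1}^r Σ_{n=1}^N ∫₀^∞ sup_{δ∈ℝ} Λ^{i,n,a}(δ)·( w(t, x + z(Sⁱ + δ), q − z·eⁱ, S) − w(t,x,q,S) ) ψ^{i,n,a}(dz), with terminal condition w(T,x,q,S) = −exp(−ρ(x + qᵀ𝒥S − qᵀΓq)). -/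

import Mathlib

open Matrix Set MeasureTheory

noncomputable section

variable {r dd : ℕ}

/-- The market-making Hamiltonian `H(z,p) = sup_δ (Λ(δ)/(ρz))(1 − e^{−ρz(δ−p)})`. -/
def Ham (ρ : ℝ) (Λ : ℝ → ℝ) (z p : ℝ) : ℝ :=
  sSup (Set.range fun δ : ℝ => Λ δ / (ρ * z) * (1 - Real.exp (-(ρ * z * (δ - p)))))

/-- Time partial derivative of `θ(t,q,S)` along `[0,T]`. -/
def ptTheta (T : ℝ) (θ : ℝ → (Fin r → ℝ) → (Fin dd → ℝ) → ℝ)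
    (t : ℝ) (q : Fin r → ℝ) (S : Fin dd → ℝ) : ℝ :=
  derivWithin (fun τ => θ τ q S) (Icc 0 T) t

/-- Gradient of `θ(t,q,S)` in `q`. -/
def gradQTheta (θ : ℝ → (Fin r → ℝ) → (Fin dd → ℝ) → ℝ)
    (t : ℝ) (q : Fin r → ℝ) (S : Fin dd → ℝ) : Fin r → ℝ :=
  fun i => deriv (fun s => θ t (Function.update q i s) S) (q i)

/-- Gradient of `θ(t,q,S)` in `S`. -/
def gradSTheta (θ : ℝ → (Fin r → ℝ) → (Fin dd → ℝ) → ℝ)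
    (t : ℝ) (q : Fin r → ℝ) (S : Fin dd → ℝ) : Fin dd → ℝ :=
  fun j => deriv (fun s => θ t q (Function.update S j s)) (S j)

/-- Hessian of `θ(t,q,S)` in `S`. -/
def hessSTheta (θ : ℝ → (Fin r → ℝ) → (Fin dd → ℝ) → ℝ)
    (t : ℝ) (q : Fin r → ℝ) (S : Fin dd → ℝ) : Matrix (Fin dd) (Fin dd) ℝ :=
  fun i j => deriv (fun s => gradSTheta θ t q (Function.update S j s) i) (S j)

/-- Time partial derivative of `w(t,x,q,S)` along `[0,T]`. -/
def ptW (T : ℝ) (w : ℝ → ℝ → (Fin r → ℝ) → (Fin dd → ℝ) → ℝ)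
    (t x : ℝ) (q : Fin r → ℝ) (S : Fin dd → ℝ) : ℝ :=
  derivWithin (fun τ => w τ x q S) (Icc 0 T) t

/-- Partial derivative of `w(t,x,q,S)` in the cash variable `x`. -/
def pxW (w : ℝ → ℝ → (Fin r → ℝ) → (Fin dd → ℝ) → ℝ)
    (t x : ℝ) (q : Fin r → ℝ) (S : Fin dd → ℝ) : ℝ :=
  deriv (fun ξ => w t ξ q S) x

/-- Gradient of `w(t,x,q,S)` in `q`. -/
def gradQW (w : ℝ → ℝ → (Fin r → ℝ) → (Fin dd → ℝ) → ℝ)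
    (t x : ℝ) (q : Fin r → ℝ) (S : Fin dd → ℝ) : Fin r → ℝ :=
  fun i => deriv (fun s => w t x (Function.update q i s) S) (q i)

/-- Gradient of `w(t,x,q,S)` in `S`. -/
def gradSW (w : ℝ → ℝ → (Fin r → ℝ) → (Fin dd → ℝ) → ℝ)
    (t x : ℝ) (q : Fin r → ℝ) (S : Fin dd → ℝ) : Fin dd → ℝ :=
  fun j => deriv (fun s => w t x q (Function.update S j s)) (S j)

/-- Hessian of `w(t,x,q,S)` in `S`. -/
def hessSW (w : ℝ → ℝ → (Fin r → ℝ) → (Fin dd → ℝ) → ℝ)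
    (t x : ℝ) (q : Fin r → ℝ) (S : Fin dd → ℝ) : Matrix (Fin dd) (Fin dd) ℝ :=
  fun i j => deriv (fun s => gradSW w t x q (Function.update S j s) i) (S j)

/-!
With `Φ = qᵀ𝒥S + θ`, the candidate is `w = -exp(-ρ(x + Φ))`. Every first derivative of `w` is
`-ρw` times the corresponding derivative of `Φ` (with `∂ₓΦ = 1`), and the `S`-Hessian is
`-ρw (D²Φ - ρ ∇Φ ∇Φᵀ)`, which produces the risk term `-(ρ/2)(∇Φ)ᵀΣ∇Φ`. In the control term the
cash cost `vᵀ𝒥S · ∂ₓw` cancels the `𝒥S` part of `∇_q w`; in each jump term the exponential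
factors as `e^{-ρ(x+Φ)} e^{-ρz(δ-p)}`, turning the supremum over `δ` into `z H(z,p)`. As
`-ρw > 0` passes through the suprema and integrals, the market maker's equation is the reduced
one multiplied by `-ρw`.
-/

theorem hasDerivAt_comp_update {m : ℕ} {f : (Fin m → ℝ) → ℝ} {S : Fin m → ℝ} (i : Fin m)
    (hf : DifferentiableAt ℝ f S) :
    HasDerivAt (fun s => f (Function.update S i s)) (fderiv ℝ f S (Pi.single i 1)) (S i) :=
  hf.hasFDerivAt.comp_hasDerivAt_of_eq (S i) (hasDerivAt_update S i (S i))
    (Function.update_eq_self i S).symm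

theorem DifferentiableAt.comp_update {m : ℕ} {f : (Fin m → ℝ) → ℝ} {S : Fin m → ℝ} (i : Fin m)
    (hf : DifferentiableAt ℝ f S) :
    DifferentiableAt ℝ (fun s => f (Function.update S i s)) (S i) :=
  (hasDerivAt_comp_update i hf).differentiableAt

theorem differentiable_deriv_comp_update {m : ℕ} {f : (Fin m → ℝ) → ℝ} (hf : ContDiff ℝ 2 f)
    (i : Fin m) :
    Differentiable ℝ fun S => deriv (fun s => f (Function.update S i s)) (S i) := by
  have hf₁ : Differentiable ℝ f := hf.differentiable two_ne_zero
  simp only [fun S => (hasDerivAt_comp_update i (hf₁ S)).deriv]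
  exact fun S => ((hf.fderiv_right (m := 1) le_rfl).differentiable one_ne_zero S).clm_apply
    (differentiableAt_const _)

theorem update_dotProduct {m : ℕ} (q v : Fin m → ℝ) (i : Fin m) (s : ℝ) :
    Function.update q i s ⬝ᵥ v = q ⬝ᵥ v + (s - q i) * v i := by
  rw [← single_dotProduct, ← add_dotProduct]
  congr 1
  ext j
  rcases eq_or_ne j i with rfl | hj <;> simp [*]

theorem hasDerivAt_update_dotProduct {m : ℕ} (q v : Fin m → ℝ) (i : Fin m) :
    HasDerivAt (fun s => Function.update q i s ⬝ᵥ v) (v i) (q i) := by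
  simp only [update_dotProduct]
  simpa using (((hasDerivAt_id (q i)).sub_const (q i)).mul_const (v i)).const_add (q ⬝ᵥ v)

theorem hasDerivAt_dotProduct_mulVec_update {m n : ℕ} (A : Matrix (Fin m) (Fin n) ℝ)
    (q : Fin m → ℝ) (S : Fin n → ℝ) (j : Fin n) :
    HasDerivAt (fun s => q ⬝ᵥ A *ᵥ Function.update S j s) ((Aᵀ *ᵥ q) j) (S j) := by
  have hA : ∀ S' : Fin n → ℝ, q ⬝ᵥ A *ᵥ S' = S' ⬝ᵥ Aᵀ *ᵥ q := fun S' => by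
    rw [dotProduct_mulVec, ← mulVec_transpose, dotProduct_comm]
  simp only [hA]
  exact hasDerivAt_update_dotProduct S (Aᵀ *ᵥ q) j

theorem HasDerivWithinAt.neg_exp_neg_mul {u : ℝ → ℝ} {u' a ρ : ℝ} {s : Set ℝ}
    (hu : HasDerivWithinAt u u' s a) :
    HasDerivWithinAt (fun y => -Real.exp (-(ρ * u y))) (-ρ * -Real.exp (-(ρ * u a)) * u') s a :=
  ((hu.const_mul ρ).fun_neg.exp.neg).congr_deriv (by ring)

theorem HasDerivAt.neg_exp_neg_mul {u : ℝ → ℝ} {u' a ρ : ℝ} (hu : HasDerivAt u u' a) :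
    HasDerivAt (fun y => -Real.exp (-(ρ * u y))) (-ρ * -Real.exp (-(ρ * u a)) * u') a := by
  rw [← hasDerivWithinAt_univ] at *
  exact hu.neg_exp_neg_mul

section ExponentialAnsatz

variable {ρ T t x : ℝ} {q : Fin r → ℝ} {S : Fin dd → ℝ}
  {w : ℝ → ℝ → (Fin r → ℝ) → (Fin dd → ℝ) → ℝ} {Φ : ℝ → (Fin r → ℝ) → (Fin dd → ℝ) → ℝ}
  (hw : ∀ t x q S, w t x q S = -Real.exp (-(ρ * (x + Φ t q S))))
include hw

theorem ptW_eq_of_exp (hT : 0 < T) (ht : t ∈ Icc 0 T) {φ' : ℝ}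
    (hΦ : HasDerivWithinAt (fun τ => Φ τ q S) φ' (Icc 0 T) t) :
    ptW T w t x q S = -ρ * w t x q S * φ' := by
  simp only [ptW, hw]
  exact (hΦ.const_add x).neg_exp_neg_mul.derivWithin (uniqueDiffOn_Icc hT t ht)

theorem pxW_eq_of_exp : pxW w t x q S = -ρ * w t x q S := by
  simp only [pxW, hw]
  simpa using ((hasDerivAt_id x).add_const (Φ t q S)).neg_exp_neg_mul.deriv

theorem gradQW_eq_of_exp {g : Fin r → ℝ}
    (hΦ : ∀ i, HasDerivAt (fun s => Φ t (Function.update q i s) S) (g i) (q i)) :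
    gradQW w t x q S = (-ρ * w t x q S) • g := by
  ext i
  simp only [gradQW, hw]
  simpa using ((hΦ i).const_add x).neg_exp_neg_mul.deriv

theorem hasDerivAt_update_of_exp {j : Fin dd} {g : ℝ}
    (hΦ : HasDerivAt (fun s => Φ t q (Function.update S j s)) g (S j)) :
    HasDerivAt (fun s => w t x q (Function.update S j s)) (-ρ * w t x q S * g) (S j) := by
  simp only [hw]
  simpa using (hΦ.const_add x).neg_exp_neg_mul

theorem gradSW_eq_of_exp {g : Fin dd → ℝ}
    (hΦ : ∀ j, HasDerivAt (fun s => Φ t q (Function.update S j s)) (g j) (S j)) :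
    gradSW w t x q S = (-ρ * w t x q S) • g :=
  funext fun j => (hasDerivAt_update_of_exp hw (hΦ j)).deriv

theorem hessSW_eq_of_exp {g : (Fin dd → ℝ) → Fin dd → ℝ} {H : Matrix (Fin dd) (Fin dd) ℝ}
    (hg : ∀ S' j, HasDerivAt (fun s => Φ t q (Function.update S' j s)) (g S' j) (S' j))
    (hH : ∀ i j, HasDerivAt (fun s => g (Function.update S j s) i) (H i j) (S j)) :
    hessSW w t x q S = (-ρ * w t x q S) • (H - ρ • vecMulVec (g S) (g S)) := by
  ext i j
  simp only [hessSW, gradSW_eq_of_exp hw (hg _), Pi.smul_apply, smul_eq_mul]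
  rw [(((hasDerivAt_update_of_exp (x := x) hw (hg S j)).const_mul (-ρ)).fun_mul (hH i j)).deriv]
  simp only [Function.update_eq_self, Matrix.sub_apply, Matrix.smul_apply, vecMulVec_apply,
    smul_eq_mul]
  ring

end ExponentialAnsatz

theorem hasDerivAt_gradSTheta_update {θ : ℝ → (Fin r → ℝ) → (Fin dd → ℝ) → ℝ} {t : ℝ}
    {q : Fin r → ℝ} (hθ : ContDiff ℝ 2 (θ t q)) (S : Fin dd → ℝ) (i j : Fin dd) :
    HasDerivAt (fun s => gradSTheta θ t q (Function.update S j s) i) (hessSTheta θ t q S i j)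
      (S j) :=
  ((differentiable_deriv_comp_update hθ i S).comp_update j).hasDerivAt

theorem sSup_range_dotProduct_smul_sub_mul {c : ℝ} (hc : 0 ≤ c) (a g : Fin r → ℝ)
    (Q : (Fin r → ℝ) → ℝ) :
    sSup (range fun v => v ⬝ᵥ c • (a + g) - (v ⬝ᵥ a + Q v) * c)
      = c * sSup (range fun v => v ⬝ᵥ g - Q v) := by
  have hv : ∀ v, v ⬝ᵥ c • (a + g) - (v ⬝ᵥ a + Q v) * c = c * (v ⬝ᵥ g - Q v) := fun v => by
    rw [dotProduct_smul, dotProduct_add, smul_eq_mul]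
    ring
  simp only [hv]
  exact (Real.mul_iSup_of_nonneg hc _).symm

theorem sSup_range_mul_neg_exp_sub {ρ z : ℝ} (hρ : 0 < ρ) (hz : 0 < z) (Λ : ℝ → ℝ) (c p : ℝ) :
    sSup (range fun δ => Λ δ * (-Real.exp (-(ρ * (c + z * (δ - p)))) - -Real.exp (-(ρ * c))))
      = ρ * Real.exp (-(ρ * c)) * (z * Ham ρ Λ z p) := by
  have hδ : ∀ δ, Λ δ * (-Real.exp (-(ρ * (c + z * (δ - p)))) - -Real.exp (-(ρ * c)))
      = ρ * Real.exp (-(ρ * c)) * z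
        * (Λ δ / (ρ * z) * (1 - Real.exp (-(ρ * z * (δ - p))))) := fun δ => by
    rw [show -(ρ * (c + z * (δ - p))) = -(ρ * c) + -(ρ * z * (δ - p)) by ring, Real.exp_add]
    field_simp
    ring
  simp only [hδ]
  rw [Ham, ← mul_assoc]
  exact (Real.mul_iSup_of_nonneg (by positivity) _).symm

theorem setIntegral_Ioi_sSup_neg_exp_sub {ρ : ℝ} (hρ : 0 < ρ) (μ : Measure ℝ) (Λ : ℝ → ℝ)
    (c : ℝ) {g : ℝ → ℝ → ℝ} {p : ℝ → ℝ} (hg : ∀ z, 0 < z → ∀ δ, g z δ = c + z * (δ - p z)) :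
    ∫ z in Ioi 0, sSup (range fun δ => Λ δ * (-Real.exp (-(ρ * g z δ)) - -Real.exp (-(ρ * c)))) ∂μ
      = ρ * Real.exp (-(ρ * c)) * ∫ z in Ioi 0, z * Ham ρ Λ z (p z) ∂μ := by
  rw [← integral_const_mul]
  refine setIntegral_congr_fun measurableSet_Ioi fun z (hz : 0 < z) => ?_
  simp only [hg z hz]
  exact sSup_range_mul_neg_exp_sub hρ hz Λ c (p z)

section JumpTerms

variable {N : ℕ} {ρ : ℝ} (hρ : 0 < ρ) (μ : Fin r → Fin N → Measure ℝ)
  (Λ : Fin r → Fin N → ℝ → ℝ) (f : (Fin r → ℝ) → ℝ) (P : Fin r → ℝ) (x : ℝ) (q : Fin r → ℝ)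
include hρ

theorem sum_setIntegral_sSup_bid :
    ∑ i, ∑ n, ∫ z in Ioi (0:ℝ), sSup (range fun δ => Λ i n δ *
        (-Real.exp (-(ρ * ((x - z * (P i - δ)) + (q + z • Pi.single i 1) ⬝ᵥ P
          + f (q + z • Pi.single i 1))))
        - -Real.exp (-(ρ * (x + q ⬝ᵥ P + f q))))) ∂μ i n
      = ρ * Real.exp (-(ρ * (x + q ⬝ᵥ P + f q))) * ∑ i, ∑ n, ∫ z in Ioi (0:ℝ),
          z * Ham ρ (Λ i n) z ((f q - f (q + z • Pi.single i 1)) / z) ∂μ i n := by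
  simp only [Finset.mul_sum]
  refine Finset.sum_congr rfl fun i _ => Finset.sum_congr rfl fun n _ => ?_
  refine setIntegral_Ioi_sSup_neg_exp_sub hρ _ _ _ fun z hz δ => ?_
  rw [add_dotProduct, smul_dotProduct, single_dotProduct]
  field_simp
  ring

theorem sum_setIntegral_sSup_ask :
    ∑ i, ∑ n, ∫ z in Ioi (0:ℝ), sSup (range fun δ => Λ i n δ *
        (-Real.exp (-(ρ * ((x + z * (P i + δ)) + (q - z • Pi.single i 1) ⬝ᵥ P
          + f (q - z • Pi.single i 1))))
        - -Real.exp (-(ρ * (x + q ⬝ᵥ P + f q))))) ∂μ i n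
      = ρ * Real.exp (-(ρ * (x + q ⬝ᵥ P + f q))) * ∑ i, ∑ n, ∫ z in Ioi (0:ℝ),
          z * Ham ρ (Λ i n) z ((f q - f (q - z • Pi.single i 1)) / z) ∂μ i n := by
  simp only [Finset.mul_sum]
  refine Finset.sum_congr rfl fun i _ => Finset.sum_congr rfl fun n _ => ?_
  refine setIntegral_Ioi_sSup_neg_exp_sub hρ _ _ _ fun z hz δ => ?_
  rw [sub_dotProduct, smul_dotProduct, single_dotProduct]
  field_simp
  ring

end JumpTerms

theorem mulVec_apply_eq_castAdd {k : ℕ} {𝒥 : Matrix (Fin r) (Fin (r + k)) ℝ}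
    (h𝒥 : ∀ i j, 𝒥 i j = if (i : ℕ) = (j : ℕ) then 1 else 0) (S : Fin (r + k) → ℝ) (i : Fin r) :
    (𝒥 *ᵥ S) i = S (Fin.castAdd k i) := by
  rw [mulVec, dotProduct, Finset.sum_eq_single (Fin.castAdd k i) _ (by simp)]
  · simp [h𝒥]
  · intro j _ hj
    have hij : (i : ℕ) ≠ j := fun h => hj (Fin.ext h.symm)
    simp [h𝒥, hij]

theorem market_making_hjb_verification_general
    (r k N : ℕ)
    (T ρ : ℝ) (hρ : 0 < ρ)
    (R : Matrix (Fin (r + k)) (Fin (r + k)) ℝ)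
    (Sbar : Fin (r + k) → ℝ)
    (Sg : Matrix (Fin (r + k)) (Fin (r + k)) ℝ)
    (η : Matrix (Fin r) (Fin r) ℝ)
    (Γ : Matrix (Fin r) (Fin r) ℝ)
    (𝒥 : Matrix (Fin r) (Fin (r + k)) ℝ)
    (h𝒥 : ∀ i j, 𝒥 i j = if (i : ℕ) = (j : ℕ) then 1 else 0)
    -- request-size distributions: probability measures supported on (0,∞)
    (ψb ψa : Fin r → Fin N → Measure ℝ)
    -- intensity functions
    (Λb Λa : Fin r → Fin N → ℝ → ℝ)
    -- `θ` is C¹ in `t` and `q`, C² in `S`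
    (θ : ℝ → (Fin r → ℝ) → (Fin (r + k) → ℝ) → ℝ)
    (hθt : ∀ (q : Fin r → ℝ) (S : Fin (r + k) → ℝ),
      ContDiffOn ℝ 1 (fun τ => θ τ q S) (Icc (0:ℝ) T))
    (hθq : ∀ t ∈ Icc (0:ℝ) T, ∀ S : Fin (r + k) → ℝ, ContDiff ℝ 1 (fun q => θ t q S))
    (hθS : ∀ t ∈ Icc (0:ℝ) T, ∀ q : Fin r → ℝ, ContDiff ℝ 2 (fun S => θ t q S))
    -- terminal condition for `θ`
    (hθT : ∀ (q : Fin r → ℝ) (S : Fin (r + k) → ℝ), θ T q S = -(q ⬝ᵥ Γ.mulVec q))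
    -- `θ` solves the reduced HJB equation on `[0,T)`
    (hθpde : ∀ t ∈ Ico (0:ℝ) T, ∀ (q : Fin r → ℝ) (S : Fin (r + k) → ℝ),
      0 = ptTheta T θ t q S
        + (Sbar - S) ⬝ᵥ Rᵀ.mulVec (𝒥ᵀ.mulVec q + gradSTheta θ t q S)
        + (1/2 : ℝ) * (Sg * hessSTheta θ t q S).trace
        - (ρ / 2) * ((𝒥ᵀ.mulVec q + gradSTheta θ t q S) ⬝ᵥ
            Sg.mulVec (𝒥ᵀ.mulVec q + gradSTheta θ t q S))
        + sSup (Set.range fun v : Fin r → ℝ =>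
            v ⬝ᵥ gradQTheta θ t q S - v ⬝ᵥ η.mulVec v)
        + ∑ i : Fin r, ∑ n : Fin N, ∫ z in Ioi (0:ℝ),
            z * Ham ρ (Λb i n) z ((θ t q S - θ t (q + z • (Pi.single i 1 : Fin r → ℝ)) S) / z) ∂ψb i n
        + ∑ i : Fin r, ∑ n : Fin N, ∫ z in Ioi (0:ℝ),
            z * Ham ρ (Λa i n) z ((θ t q S - θ t (q - z • (Pi.single i 1 : Fin r → ℝ)) S) / z) ∂ψa i n) :
    -- `w(t,x,q,S) = −exp(−ρ(x + qᵀ𝒥S + θ(t,q,S)))` solves the market maker's HJB on `[0,T)` …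
    (∀ t ∈ Ico (0:ℝ) T, ∀ (x : ℝ) (q : Fin r → ℝ) (S : Fin (r + k) → ℝ),
      0 = ptW T (fun t x q S => -Real.exp (-(ρ * (x + q ⬝ᵥ 𝒥.mulVec S + θ t q S)))) t x q S
        + (Sbar - S) ⬝ᵥ Rᵀ.mulVec
            (gradSW (fun t x q S => -Real.exp (-(ρ * (x + q ⬝ᵥ 𝒥.mulVec S + θ t q S)))) t x q S)
        + (1/2 : ℝ) * (Sg * hessSW
            (fun t x q S => -Real.exp (-(ρ * (x + q ⬝ᵥ 𝒥.mulVec S + θ t q S)))) t x q S).trace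
        + sSup (Set.range fun v : Fin r → ℝ =>
            v ⬝ᵥ gradQW (fun t x q S =>
                -Real.exp (-(ρ * (x + q ⬝ᵥ 𝒥.mulVec S + θ t q S)))) t x q S
              - (v ⬝ᵥ 𝒥.mulVec S + v ⬝ᵥ η.mulVec v) *
                  pxW (fun t x q S =>
                    -Real.exp (-(ρ * (x + q ⬝ᵥ 𝒥.mulVec S + θ t q S)))) t x q S)
        + ∑ i : Fin r, ∑ n : Fin N, ∫ z in Ioi (0:ℝ),
            sSup (Set.range fun δ : ℝ => Λb i n δ *
              (-Real.exp (-(ρ * ((x - z * (S (Fin.castAdd k i) - δ))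
                  + (q + z • (Pi.single i 1 : Fin r → ℝ)) ⬝ᵥ 𝒥.mulVec S + θ t (q + z • (Pi.single i 1 : Fin r → ℝ)) S)))
                - -Real.exp (-(ρ * (x + q ⬝ᵥ 𝒥.mulVec S + θ t q S))))) ∂ψb i n
        + ∑ i : Fin r, ∑ n : Fin N, ∫ z in Ioi (0:ℝ),
            sSup (Set.range fun δ : ℝ => Λa i n δ *
              (-Real.exp (-(ρ * ((x + z * (S (Fin.castAdd k i) + δ))
                  + (q - z • (Pi.single i 1 : Fin r → ℝ)) ⬝ᵥ 𝒥.mulVec S + θ t (q - z • (Pi.single i 1 : Fin r → ℝ)) S)))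
                - -Real.exp (-(ρ * (x + q ⬝ᵥ 𝒥.mulVec S + θ t q S))))) ∂ψa i n) ∧
    -- … with the correct terminal condition
    (∀ (x : ℝ) (q : Fin r → ℝ) (S : Fin (r + k) → ℝ),
      -Real.exp (-(ρ * (x + q ⬝ᵥ 𝒥.mulVec S + θ T q S)))
        = -Real.exp (-(ρ * (x + q ⬝ᵥ 𝒥.mulVec S - q ⬝ᵥ Γ.mulVec q)))) := by
  refine ⟨fun t ht x q S => ?_, fun x q S => by rw [hθT, sub_eq_add_neg]⟩
  have hT : 0 < T := ht.1.trans_lt ht.2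
  have ht' : t ∈ Icc 0 T := Ico_subset_Icc_self ht
  have hw : ∀ t x q S, -Real.exp (-(ρ * (x + q ⬝ᵥ 𝒥 *ᵥ S + θ t q S)))
      = -Real.exp (-(ρ * (x + (q ⬝ᵥ 𝒥 *ᵥ S + θ t q S)))) := fun _ _ _ _ => by rw [add_assoc]
  have hθS₁ : Differentiable ℝ (θ t q) := (hθS t ht' q).differentiable two_ne_zero
  have hθq₁ : Differentiable ℝ (θ t · S) := (hθq t ht' S).differentiable one_ne_zero
  have hgradS : ∀ S' j, HasDerivAt
      (fun s => q ⬝ᵥ 𝒥 *ᵥ Function.update S' j s + θ t q (Function.update S' j s))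
      ((𝒥ᵀ *ᵥ q + gradSTheta θ t q S') j) (S' j) := fun S' j =>
    (hasDerivAt_dotProduct_mulVec_update 𝒥 q S' j).add ((hθS₁ S').comp_update j).hasDerivAt
  have hgradQ : ∀ i, HasDerivAt
      (fun s => Function.update q i s ⬝ᵥ 𝒥 *ᵥ S + θ t (Function.update q i s) S)
      ((𝒥 *ᵥ S + gradQTheta θ t q S) i) (q i) := fun i =>
    (hasDerivAt_update_dotProduct q _ i).add ((hθq₁ q).comp_update i).hasDerivAt
  have hdt : HasDerivWithinAt (fun τ => q ⬝ᵥ 𝒥 *ᵥ S + θ τ q S) (ptTheta T θ t q S) (Icc 0 T) t :=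
    ((hθt q S).differentiableOn one_ne_zero t ht').hasDerivWithinAt.const_add _
  have hhess : ∀ i j, HasDerivAt (fun s => (𝒥ᵀ *ᵥ q + gradSTheta θ t q (Function.update S j s)) i)
      (hessSTheta θ t q S i j) (S j) := fun i j =>
    (hasDerivAt_gradSTheta_update (hθS t ht' q) S i j).const_add _
  rw [ptW_eq_of_exp hw hT ht' hdt, pxW_eq_of_exp hw, gradQW_eq_of_exp hw hgradQ,
    gradSW_eq_of_exp hw (hgradS S), hessSW_eq_of_exp hw hgradS hhess,
    sSup_range_dotProduct_smul_sub_mul]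
  · simp only [← mulVec_apply_eq_castAdd h𝒥 S]
    rw [sum_setIntegral_sSup_bid hρ ψb Λb (θ t · S), sum_setIntegral_sSup_ask hρ ψa Λa (θ t · S)]
    simp only [mulVec_smul, dotProduct_smul, Matrix.mul_smul, Matrix.mul_sub, trace_smul, trace_sub,
      mul_vecMulVec, trace_vecMulVec, dotProduct_comm (Sg *ᵥ _), smul_eq_mul]
    linear_combination (-ρ * -Real.exp (-(ρ * (x + q ⬝ᵥ 𝒥 *ᵥ S + θ t q S)))) * hθpde t ht q S
  · rw [neg_mul_neg]
    positivity

/-- **Market-making verification proposition.** If `θ` solves the reduced market-making HJB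
with terminal condition `θ(T,q,S) = −qᵀΓq`, then
`w(t,x,q,S) = −exp(−ρ(x + qᵀ𝒥S + θ(t,q,S)))` solves the market maker's HJB equation. -/
theorem market_making_hjb_verification
    (r k N : ℕ) (hr : 0 < r) (hk : 0 < k) (hN : 0 < N)
    (T ρ : ℝ) (hT : 0 < T) (hρ : 0 < ρ)
    (R : Matrix (Fin (r + k)) (Fin (r + k)) ℝ)
    (Sbar : Fin (r + k) → ℝ)
    (Sg : Matrix (Fin (r + k)) (Fin (r + k)) ℝ) (hSg : Sg.PosSemidef)
    (η : Matrix (Fin r) (Fin r) ℝ) (hη : η.PosDef)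
    (Γ : Matrix (Fin r) (Fin r) ℝ) (hΓ : Γ.IsSymm)
    (𝒥 : Matrix (Fin r) (Fin (r + k)) ℝ)
    (h𝒥 : ∀ i j, 𝒥 i j = if (i : ℕ) = (j : ℕ) then 1 else 0)
    -- request-size distributions: probability measures supported on (0,∞)
    (ψb ψa : Fin r → Fin N → Measure ℝ)
    (hψb : ∀ i n, IsProbabilityMeasure (ψb i n)) (hψbsupp : ∀ i n, ψb i n (Iic 0) = 0)
    (hψa : ∀ i n, IsProbabilityMeasure (ψa i n)) (hψasupp : ∀ i n, ψa i n (Iic 0) = 0)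
    -- intensity functions
    (Λb Λa : Fin r → Fin N → ℝ → ℝ)
    (hΛbpos : ∀ i n δ, 0 < Λb i n δ) (hΛapos : ∀ i n δ, 0 < Λa i n δ)
    (hΛbC2 : ∀ i n, ContDiff ℝ 2 (Λb i n)) (hΛaC2 : ∀ i n, ContDiff ℝ 2 (Λa i n))
    (hΛbdec : ∀ i n, StrictAnti (Λb i n)) (hΛadec : ∀ i n, StrictAnti (Λa i n))
    (hΛblim : ∀ i n, Filter.Tendsto (Λb i n) Filter.atTop (nhds 0))
    (hΛalim : ∀ i n, Filter.Tendsto (Λa i n) Filter.atTop (nhds 0))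
    (hΛbsup : ∀ i n, ∃ c : ℝ, c < 2 ∧ ∀ δ,
      Λb i n δ * deriv (deriv (Λb i n)) δ / (deriv (Λb i n) δ) ^ 2 ≤ c)
    (hΛasup : ∀ i n, ∃ c : ℝ, c < 2 ∧ ∀ δ,
      Λa i n δ * deriv (deriv (Λa i n)) δ / (deriv (Λa i n) δ) ^ 2 ≤ c)
    -- `θ` is C¹ in `t` and `q`, C² in `S`
    (θ : ℝ → (Fin r → ℝ) → (Fin (r + k) → ℝ) → ℝ)
    (hθt : ∀ (q : Fin r → ℝ) (S : Fin (r + k) → ℝ),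
      ContDiffOn ℝ 1 (fun τ => θ τ q S) (Icc (0:ℝ) T))
    (hθq : ∀ t ∈ Icc (0:ℝ) T, ∀ S : Fin (r + k) → ℝ, ContDiff ℝ 1 (fun q => θ t q S))
    (hθS : ∀ t ∈ Icc (0:ℝ) T, ∀ q : Fin r → ℝ, ContDiff ℝ 2 (fun S => θ t q S))
    -- terminal condition for `θ`
    (hθT : ∀ (q : Fin r → ℝ) (S : Fin (r + k) → ℝ), θ T q S = -(q ⬝ᵥ Γ.mulVec q))
    -- the integrals appearing in the reduced HJB are finite
    (hIntb : ∀ (t : ℝ) (q : Fin r → ℝ) (S : Fin (r + k) → ℝ) (i : Fin r) (n : Fin N),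
      IntegrableOn (fun z : ℝ => z * Ham ρ (Λb i n) z
        ((θ t q S - θ t (q + z • (Pi.single i 1 : Fin r → ℝ)) S) / z)) (Ioi 0) (ψb i n))
    (hInta : ∀ (t : ℝ) (q : Fin r → ℝ) (S : Fin (r + k) → ℝ) (i : Fin r) (n : Fin N),
      IntegrableOn (fun z : ℝ => z * Ham ρ (Λa i n) z
        ((θ t q S - θ t (q - z • (Pi.single i 1 : Fin r → ℝ)) S) / z)) (Ioi 0) (ψa i n))
    -- `θ` solves the reduced HJB equation on `[0,T)`
    (hθpde : ∀ t ∈ Ico (0:ℝ) T, ∀ (q : Fin r → ℝ) (S : Fin (r + k) → ℝ),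
      0 = ptTheta T θ t q S
        + (Sbar - S) ⬝ᵥ Rᵀ.mulVec (𝒥ᵀ.mulVec q + gradSTheta θ t q S)
        + (1/2 : ℝ) * (Sg * hessSTheta θ t q S).trace
        - (ρ / 2) * ((𝒥ᵀ.mulVec q + gradSTheta θ t q S) ⬝ᵥ
            Sg.mulVec (𝒥ᵀ.mulVec q + gradSTheta θ t q S))
        + sSup (Set.range fun v : Fin r → ℝ =>
            v ⬝ᵥ gradQTheta θ t q S - v ⬝ᵥ η.mulVec v)
        + ∑ i : Fin r, ∑ n : Fin N, ∫ z in Ioi (0:ℝ),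
            z * Ham ρ (Λb i n) z ((θ t q S - θ t (q + z • (Pi.single i 1 : Fin r → ℝ)) S) / z) ∂ψb i n
        + ∑ i : Fin r, ∑ n : Fin N, ∫ z in Ioi (0:ℝ),
            z * Ham ρ (Λa i n) z ((θ t q S - θ t (q - z • (Pi.single i 1 : Fin r → ℝ)) S) / z) ∂ψa i n)
    -- the integrals appearing in the market maker's HJB are finite
    (hIntWb : ∀ (t x : ℝ) (q : Fin r → ℝ) (S : Fin (r + k) → ℝ) (i : Fin r) (n : Fin N),
      IntegrableOn (fun z : ℝ => sSup (Set.range fun δ : ℝ => Λb i n δ *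
        (-Real.exp (-(ρ * ((x - z * (S (Fin.castAdd k i) - δ))
            + (q + z • (Pi.single i 1 : Fin r → ℝ)) ⬝ᵥ 𝒥.mulVec S + θ t (q + z • (Pi.single i 1 : Fin r → ℝ)) S)))
          - -Real.exp (-(ρ * (x + q ⬝ᵥ 𝒥.mulVec S + θ t q S)))))) (Ioi 0) (ψb i n))
    (hIntWa : ∀ (t x : ℝ) (q : Fin r → ℝ) (S : Fin (r + k) → ℝ) (i : Fin r) (n : Fin N),
      IntegrableOn (fun z : ℝ => sSup (Set.range fun δ : ℝ => Λa i n δ *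
        (-Real.exp (-(ρ * ((x + z * (S (Fin.castAdd k i) + δ))
            + (q - z • (Pi.single i 1 : Fin r → ℝ)) ⬝ᵥ 𝒥.mulVec S + θ t (q - z • (Pi.single i 1 : Fin r → ℝ)) S)))
          - -Real.exp (-(ρ * (x + q ⬝ᵥ 𝒥.mulVec S + θ t q S)))))) (Ioi 0) (ψa i n)) :
    -- `w(t,x,q,S) = −exp(−ρ(x + qᵀ𝒥S + θ(t,q,S)))` solves the market maker's HJB on `[0,T)` …
    (∀ t ∈ Ico (0:ℝ) T, ∀ (x : ℝ) (q : Fin r → ℝ) (S : Fin (r + k) → ℝ),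
      0 = ptW T (fun t x q S => -Real.exp (-(ρ * (x + q ⬝ᵥ 𝒥.mulVec S + θ t q S)))) t x q S
        + (Sbar - S) ⬝ᵥ Rᵀ.mulVec
            (gradSW (fun t x q S => -Real.exp (-(ρ * (x + q ⬝ᵥ 𝒥.mulVec S + θ t q S)))) t x q S)
        + (1/2 : ℝ) * (Sg * hessSW
            (fun t x q S => -Real.exp (-(ρ * (x + q ⬝ᵥ 𝒥.mulVec S + θ t q S)))) t x q S).trace
        + sSup (Set.range fun v : Fin r → ℝ =>
            v ⬝ᵥ gradQW (fun t x q S =>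
                -Real.exp (-(ρ * (x + q ⬝ᵥ 𝒥.mulVec S + θ t q S)))) t x q S
              - (v ⬝ᵥ 𝒥.mulVec S + v ⬝ᵥ η.mulVec v) *
                  pxW (fun t x q S =>
                    -Real.exp (-(ρ * (x + q ⬝ᵥ 𝒥.mulVec S + θ t q S)))) t x q S)
        + ∑ i : Fin r, ∑ n : Fin N, ∫ z in Ioi (0:ℝ),
            sSup (Set.range fun δ : ℝ => Λb i n δ *
              (-Real.exp (-(ρ * ((x - z * (S (Fin.castAdd k i) - δ))
                  + (q + z • (Pi.single i 1 : Fin r → ℝ)) ⬝ᵥ 𝒥.mulVec S + θ t (q + z • (Pi.single i 1 : Fin r → ℝ)) S)))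
                - -Real.exp (-(ρ * (x + q ⬝ᵥ 𝒥.mulVec S + θ t q S))))) ∂ψb i n
        + ∑ i : Fin r, ∑ n : Fin N, ∫ z in Ioi (0:ℝ),
            sSup (Set.range fun δ : ℝ => Λa i n δ *
              (-Real.exp (-(ρ * ((x + z * (S (Fin.castAdd k i) + δ))
                  + (q - z • (Pi.single i 1 : Fin r → ℝ)) ⬝ᵥ 𝒥.mulVec S + θ t (q - z • (Pi.single i 1 : Fin r → ℝ)) S)))
                - -Real.exp (-(ρ * (x + q ⬝ᵥ 𝒥.mulVec S + θ t q S))))) ∂ψa i n) ∧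
    -- … with the correct terminal condition
    (∀ (x : ℝ) (q : Fin r → ℝ) (S : Fin (r + k) → ℝ),
      -Real.exp (-(ρ * (x + q ⬝ᵥ 𝒥.mulVec S + θ T q S)))
        = -Real.exp (-(ρ * (x + q ⬝ᵥ 𝒥.mulVec S - q ⬝ᵥ Γ.mulVec q)))) :=
  market_making_hjb_verification_general r k N T ρ hρ R Sbar Sg η Γ 𝒥 h𝒥 ψb ψa Λb Λa θ hθt hθq hθS
    hθT hθpde
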